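/- Let n ≥ 2 and m ≥ 2 be integers. For each positive integer j define ρ_j : [0, ∞) → [0, ∞) by ρ_j(s) = c_j s^j for s ∈ [0,1] and ρ_j(s) = 0 for s > 1, where c_j = (2j + n + m)/((n+m) ω_{n+m}). Then: (i) ∫_{y ∈ ℝ^{n+m}, |y| ≤ 1} ρ_j(|y|²) dy = 1; (ii) α_{ρ_j} := sup_{z ∈ ℝ^n} ∫_{{v ∈ ℝ^m : |z|² + |v|² ≤ 1}} ρ_j(|z|² + |v|²) dv ≤ (m ω_m / ((n+m) ω_{n+m})) · (2j + n + m)/(2j + m); and (iii) lim_{j→∞} α_{ρ_j} = m ω_m / ((n+m) ω_{n+m}). -/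

import Mathlib

open Real MeasureTheory Filter

/-- The Lebesgue volume of the unit ball in `ℝ^k`. -/
noncomputable def ballVol (k : ℕ) : ℝ := Real.pi ^ ((k : ℝ) / 2) / Real.Gamma ((k : ℝ) / 2 + 1)

/-- The density `ρ_j(s) = c_j s^j` on `[0,1]`, extended by `0` for `s > 1`, where
`c_j = (2j + n + m)/((n+m) ω_{n+m})`. -/
noncomputable def ρj (n m j : ℕ) (s : ℝ) : ℝ :=
  if s ≤ 1 then (2 * (j : ℝ) + n + m) / (((n : ℝ) + m) * ballVol (n + m)) * s ^ j else 0

open Set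

lemma ballVol_pos (k : ℕ) : 0 < ballVol k := by
  unfold ballVol
  exact div_pos (Real.rpow_pos_of_pos Real.pi_pos _) (Real.Gamma_pos_of_pos (by positivity))

lemma ballVol_toReal (k : ℕ) (hk : 1 ≤ k) :
    (volume (Metric.ball (0 : EuclideanSpace ℝ (Fin k)) 1)).toReal = ballVol k := by
  haveI : Nonempty (Fin k) := ⟨⟨0, hk⟩⟩
  have hΓ : 0 < Real.Gamma ((k : ℝ) / 2 + 1) := Real.Gamma_pos_of_pos (by positivity)
  rw [EuclideanSpace.volume_ball]
  simp only [Fintype.card_fin, ENNReal.ofReal_one, one_pow, one_mul]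
  rw [ENNReal.toReal_ofReal (by positivity)]
  unfold ballVol
  congr 1
  rw [Real.sqrt_eq_rpow, ← Real.rpow_natCast (Real.pi ^ ((1:ℝ)/2)) k,
    ← Real.rpow_mul Real.pi_pos.le]
  norm_num
  ring_nf

lemma radial_eq (n m k j : ℕ) (hk : 1 ≤ k) (a : ℝ) :
    (∫ v in {v : EuclideanSpace ℝ (Fin k) | a + ‖v‖ ^ 2 ≤ 1}, ρj n m j (a + ‖v‖ ^ 2))
      = (k : ℝ) * ballVol k * ∫ r in Ioi (0:ℝ), r ^ (k - 1) * ρj n m j (a + r ^ 2) := by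
  haveI : Nonempty (Fin k) := ⟨⟨0, hk⟩⟩
  haveI : Nontrivial (EuclideanSpace ℝ (Fin k)) :=
    inferInstance
  rw [setIntegral_eq_integral_of_forall_compl_eq_zero (fun x hx => by
    simp only [Set.mem_setOf_eq, not_le] at hx
    simp [ρj, not_le.2 hx])]
  rw [MeasureTheory.integral_fun_norm_addHaar volume (fun r => ρj n m j (a + r ^ 2))]
  simp only [finrank_euclideanSpace_fin, nsmul_eq_mul, smul_eq_mul, measureReal_def,
    ballVol_toReal k hk, add_comm]
  ring

lemma oneD_exact (n m k j : ℕ) (hk : 1 ≤ k) :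
    ∫ r in Ioi (0:ℝ), r ^ (k - 1) * ρj n m j (r ^ 2)
      = (2 * (j : ℝ) + n + m) / (((n : ℝ) + m) * ballVol (n + m)) / (2 * j + k) := by
  set c : ℝ := (2 * (j : ℝ) + n + m) / (((n : ℝ) + m) * ballVol (n + m)) with hc
  have heq : EqOn (fun r : ℝ => r ^ (k - 1) * ρj n m j (r ^ 2))
      ((Ioc (0:ℝ) 1).indicator (fun r => c * r ^ (k - 1 + 2 * j))) (Ioi 0) := by
    intro r hr
    simp only [Set.mem_Ioi] at hr
    simp only [indicator, mem_Ioc, ρj, ← hc]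
    by_cases h : r ^ 2 ≤ 1
    · have hr1 : r ≤ 1 := (pow_le_one_iff_of_nonneg hr.le two_ne_zero).mp h
      rw [if_pos h, if_pos ⟨hr, hr1⟩, ← pow_mul, pow_add]
      ring
    · have hr1 : ¬ (r ≤ 1) := fun hle => h (pow_le_one₀ hr.le hle)
      rw [if_neg h, if_neg (fun hmem => hr1 hmem.2)]
      ring
  rw [setIntegral_congr_fun measurableSet_Ioi heq,
    setIntegral_indicator measurableSet_Ioc,
    show Ioi (0:ℝ) ∩ Ioc 0 1 = Ioc 0 1 by
      rw [Set.inter_eq_right]; exact Ioc_subset_Ioi_self,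
    ← intervalIntegral.integral_of_le zero_le_one,
    intervalIntegral.integral_const_mul, integral_pow]
  have hnat : ((k - 1 + 2 * j : ℕ) : ℝ) + 1 = 2 * j + k := by
    push_cast [Nat.cast_sub hk]
    ring
  rw [one_pow, zero_pow (by omega), hnat]
  ring
lemma oneD_bound (n m k j : ℕ) (hk : 2 ≤ k) (hj : 1 ≤ j) (a : ℝ) (ha : 0 ≤ a) :
    ∫ r in Ioi (0:ℝ), r ^ (k - 1) * ρj n m j (a + r ^ 2)
      ≤ (2 * (j : ℝ) + n + m) / (((n : ℝ) + m) * ballVol (n + m)) / (2 * j + k) := by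
  set c : ℝ := (2 * (j : ℝ) + n + m) / (((n : ℝ) + m) * ballVol (n + m)) with hc
  have hkR : (2:ℝ) ≤ k := by exact_mod_cast hk
  have hjR : (1:ℝ) ≤ j := by exact_mod_cast hj
  have hcnn : 0 ≤ c := div_nonneg (by positivity)
    (mul_nonneg (by positivity) (ballVol_pos _).le)
  have hden : (0:ℝ) < 2 * j + k := by linarith
  by_cases ha1 : 1 < a
  · have heq : EqOn (fun r : ℝ => r ^ (k - 1) * ρj n m j (a + r ^ 2)) (fun _ => (0:ℝ))
        (Ioi 0) := by
      intro r _
      have : ¬ (a + r ^ 2 ≤ 1) := by nlinarith [sq_nonneg r]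
      simp [ρj, this]
    rw [setIntegral_congr_fun measurableSet_Ioi heq]
    simp only [integral_zero]
    positivity
  push_neg at ha1
  set b : ℝ := Real.sqrt (1 - a) with hb
  have hbnn : 0 ≤ b := Real.sqrt_nonneg _
  have hb2 : a + b ^ 2 = 1 := by
    rw [hb, Real.sq_sqrt (by linarith)]; ring
  set p : ℝ := (j : ℝ) + k / 2 with hp
  have hp1 : 1 ≤ p := by rw [hp]; linarith
  -- Step A: rewrite integrand as indicator
  have heq : EqOn (fun r : ℝ => r ^ (k - 1) * ρj n m j (a + r ^ 2))
      ((Ioc (0:ℝ) b).indicator (fun r => c * (r ^ (k - 1) * (a + r ^ 2) ^ j))) (Ioi 0) := by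
    intro r hr
    simp only [Set.mem_Ioi] at hr
    have hiff : a + r ^ 2 ≤ 1 ↔ r ≤ b := by
      rw [hb]
      rw [Real.le_sqrt hr.le (by linarith)]
      constructor <;> intro h <;> linarith
    simp only [indicator, mem_Ioc, ρj, ← hc]
    by_cases h : a + r ^ 2 ≤ 1
    · rw [if_pos h, if_pos ⟨hr, hiff.mp h⟩]; ring
    · rw [if_neg h, if_neg (fun hmem => h (hiff.mpr hmem.2))]; ring
  rw [setIntegral_congr_fun measurableSet_Ioi heq,
    setIntegral_indicator measurableSet_Ioc,
    show Ioi (0:ℝ) ∩ Ioc 0 b = Ioc 0 b by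
      rw [Set.inter_eq_right]; exact Ioc_subset_Ioi_self]
  -- Step B: pointwise bound
  have hmono : ∫ r in Ioc (0:ℝ) b, c * (r ^ (k - 1) * (a + r ^ 2) ^ j)
      ≤ ∫ r in Ioc (0:ℝ) b, c * (r * (a + r ^ 2) ^ (p - 1)) := by
    have hcontg : ContinuousOn (fun r : ℝ => c * (r * (a + r ^ 2) ^ (p - 1))) (Icc 0 b) := by
      apply continuousOn_const.mul
      apply continuousOn_id.mul
      exact (ContinuousOn.rpow_const (by fun_prop) (fun x _ => Or.inr (by linarith)))
    apply setIntegral_mono_on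
    · exact (Continuous.integrableOn_Ioc (by fun_prop))
    · exact (hcontg.integrableOn_Icc).mono_set Ioc_subset_Icc_self
    · exact measurableSet_Ioc
    · intro x hx
      obtain ⟨hx0, hxb⟩ := hx
      have hax : (0:ℝ) < a + x ^ 2 := by positivity
      apply mul_le_mul_of_nonneg_left _ hcnn
      have h1 : x ^ (k - 1) = x * x ^ (k - 2) := by
        rw [← pow_succ']
        congr 1
        omega
      have e1 : x ^ (k - 2) = (x ^ 2) ^ (((k:ℝ) - 2) / 2) := by
        rw [← Real.rpow_natCast x 2, ← Real.rpow_mul hx0.le,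
          ← Real.rpow_natCast x (k - 2)]
        congr 1
        push_cast [Nat.cast_sub hk]
        ring
      have h2 : x ^ (k - 2) ≤ (a + x ^ 2) ^ (((k:ℝ) - 2) / 2) := by
        rw [e1]
        exact Real.rpow_le_rpow (sq_nonneg x) (by linarith) (by linarith)
      have h3 : (a + x ^ 2) ^ (((k:ℝ) - 2) / 2) * (a + x ^ 2) ^ (j : ℕ)
          = (a + x ^ 2) ^ (p - 1) := by
        rw [← Real.rpow_natCast (a + x ^ 2) j, ← Real.rpow_add hax]
        congr 1
        rw [hp]; ring
      calc x ^ (k - 1) * (a + x ^ 2) ^ j = x * (x ^ (k - 2) * (a + x ^ 2) ^ j) := by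
            rw [h1]; ring
        _ ≤ x * ((a + x ^ 2) ^ (((k:ℝ) - 2) / 2) * (a + x ^ 2) ^ j) := by
            apply mul_le_mul_of_nonneg_left
              (mul_le_mul_of_nonneg_right h2 (by positivity)) hx0.le
        _ = x * (a + x ^ 2) ^ (p - 1) := by rw [h3]
  refine hmono.trans ?_
  -- Step C: FTC
  have hderiv : ∀ x ∈ Set.uIcc (0:ℝ) b,
      HasDerivAt (fun y : ℝ => c * ((a + y ^ 2) ^ p / (2 * p)))
        (c * (x * (a + x ^ 2) ^ (p - 1))) x := by
    intro x _
    have h1 : HasDerivAt (fun y : ℝ => a + y ^ 2) (2 * x) x := by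
      simpa using (hasDerivAt_pow 2 x).const_add a
    have h2 : HasDerivAt (fun y : ℝ => y ^ p) (p * (a + x ^ 2) ^ (p - 1)) (a + x ^ 2) :=
      Real.hasDerivAt_rpow_const (Or.inr hp1)
    have h4 := ((h2.comp x h1).div_const (2 * p)).const_mul c
    refine HasDerivAt.congr_deriv h4 ?_
    field_simp [show p ≠ 0 by linarith]
  have hint : IntervalIntegrable (fun r : ℝ => c * (r * (a + r ^ 2) ^ (p - 1)))
      volume 0 b := by
    apply ContinuousOn.intervalIntegrable
    apply continuousOn_const.mul
    apply continuousOn_id.mul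
    exact (ContinuousOn.rpow_const (by fun_prop) (fun x _ => Or.inr (by linarith)))
  rw [← intervalIntegral.integral_of_le hbnn,
    intervalIntegral.integral_eq_sub_of_hasDerivAt hderiv hint, hb2]
  have hap : 0 ≤ a ^ p := Real.rpow_nonneg ha _
  have h2p : 2 * p = 2 * (j:ℝ) + k := by rw [hp]; ring
  rw [Real.one_rpow]
  have : c * (1 / (2 * p)) - c * ((a + 0 ^ 2) ^ p / (2 * p))
      ≤ c / (2 * j + k) := by
    rw [← h2p]
    have h0 : 0 ≤ (a + 0 ^ 2) ^ p := by
      simpa using Real.rpow_nonneg (by simpa using ha) p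
    have hpp : (0:ℝ) < 2 * p := by linarith
    have : c * ((a + 0 ^ 2) ^ p / (2 * p)) ≥ 0 := by positivity
    calc c * (1 / (2 * p)) - c * ((a + 0 ^ 2) ^ p / (2 * p)) ≤ c * (1 / (2 * p)) := by linarith
      _ = c / (2 * p) := by ring
  linarith [this]

theorem stmt_19 (n m : ℕ) (hn : 2 ≤ n) (hm : 2 ≤ m) :
    (∀ j : ℕ, 0 < j →
      (∫ y in {y : EuclideanSpace ℝ (Fin (n + m)) | ‖y‖ ≤ 1}, ρj n m j (‖y‖ ^ 2)) = 1) ∧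
    (∀ j : ℕ, 0 < j →
      (⨆ z : EuclideanSpace ℝ (Fin n),
          ∫ v in {v : EuclideanSpace ℝ (Fin m) | ‖z‖ ^ 2 + ‖v‖ ^ 2 ≤ 1},
            ρj n m j (‖z‖ ^ 2 + ‖v‖ ^ 2)) ≤
        ((m : ℝ) * ballVol m / (((n : ℝ) + m) * ballVol (n + m))) *
          ((2 * (j : ℝ) + n + m) / (2 * (j : ℝ) + m))) ∧
    Filter.Tendsto
      (fun j : ℕ =>
        ⨆ z : EuclideanSpace ℝ (Fin n),
          ∫ v in {v : EuclideanSpace ℝ (Fin m) | ‖z‖ ^ 2 + ‖v‖ ^ 2 ≤ 1},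
            ρj n m j (‖z‖ ^ 2 + ‖v‖ ^ 2))
      Filter.atTop (nhds ((m : ℝ) * ballVol m / (((n : ℝ) + m) * ballVol (n + m)))) := by
  have hωN := ballVol_pos (n + m)
  have hωm := ballVol_pos m
  have hnR : (2:ℝ) ≤ n := by exact_mod_cast hn
  have hmR : (2:ℝ) ≤ m := by exact_mod_cast hm
  have hnm : ((n:ℝ) + m) ≠ 0 := by linarith
  haveI : Nonempty (EuclideanSpace ℝ (Fin n)) := ⟨0⟩
  -- Part (i)
  have part1 : ∀ j : ℕ, 0 < j →
      (∫ y in {y : EuclideanSpace ℝ (Fin (n + m)) | ‖y‖ ≤ 1}, ρj n m j (‖y‖ ^ 2)) = 1 := by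
    intro j hj
    have hjR : (0:ℝ) ≤ j := by positivity
    have hset : {y : EuclideanSpace ℝ (Fin (n + m)) | ‖y‖ ≤ 1}
        = {y : EuclideanSpace ℝ (Fin (n + m)) | ‖y‖ ^ 2 ≤ 1} := by
      ext y
      simp only [Set.mem_setOf_eq]
      exact (pow_le_one_iff_of_nonneg (norm_nonneg _) two_ne_zero).symm
    rw [hset]
    have h := radial_eq n m (n + m) j (by omega) 0
    simp only [zero_add] at h
    rw [h, oneD_exact n m (n + m) j (by omega)]
    have h2j : 2 * (j:ℝ) + (n + m : ℕ) ≠ 0 := by push_cast; linarith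
    push_cast
    field_simp
    ring
  -- uniform upper bound
  have hub : ∀ j : ℕ, 0 < j → ∀ z : EuclideanSpace ℝ (Fin n),
      (∫ v in {v : EuclideanSpace ℝ (Fin m) | ‖z‖ ^ 2 + ‖v‖ ^ 2 ≤ 1},
          ρj n m j (‖z‖ ^ 2 + ‖v‖ ^ 2))
        ≤ ((m : ℝ) * ballVol m / (((n : ℝ) + m) * ballVol (n + m))) *
          ((2 * (j : ℝ) + n + m) / (2 * (j : ℝ) + m)) := by
    intro j hj z
    have hjR : (0:ℝ) ≤ j := by positivity
    rw [radial_eq n m m j (by omega) (‖z‖ ^ 2)]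
    have hb := oneD_bound n m m j hm (by omega) (‖z‖ ^ 2) (by positivity)
    have h2jm : 2 * (j:ℝ) + (m:ℝ) ≠ 0 := by linarith
    calc (m:ℝ) * ballVol m * ∫ r in Set.Ioi (0:ℝ), r ^ (m - 1) * ρj n m j (‖z‖ ^ 2 + r ^ 2)
        ≤ (m:ℝ) * ballVol m *
          ((2 * (j : ℝ) + n + m) / (((n : ℝ) + m) * ballVol (n + m)) / (2 * j + m)) := by
          apply mul_le_mul_of_nonneg_left hb (by positivity)
      _ = ((m : ℝ) * ballVol m / (((n : ℝ) + m) * ballVol (n + m))) *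
          ((2 * (j : ℝ) + n + m) / (2 * (j : ℝ) + m)) := by
          field_simp
  -- the supremum is exactly the bound, for j ≥ 1
  have hval : ∀ j : ℕ, 0 < j →
      (⨆ z : EuclideanSpace ℝ (Fin n),
          ∫ v in {v : EuclideanSpace ℝ (Fin m) | ‖z‖ ^ 2 + ‖v‖ ^ 2 ≤ 1},
            ρj n m j (‖z‖ ^ 2 + ‖v‖ ^ 2))
        = ((m : ℝ) * ballVol m / (((n : ℝ) + m) * ballVol (n + m))) *
          ((2 * (j : ℝ) + n + m) / (2 * (j : ℝ) + m)) := by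
    intro j hj
    have hjR : (0:ℝ) ≤ j := by positivity
    have hbdd : BddAbove (Set.range fun z : EuclideanSpace ℝ (Fin n) =>
        ∫ v in {v : EuclideanSpace ℝ (Fin m) | ‖z‖ ^ 2 + ‖v‖ ^ 2 ≤ 1},
          ρj n m j (‖z‖ ^ 2 + ‖v‖ ^ 2)) := by
      refine ⟨((m : ℝ) * ballVol m / (((n : ℝ) + m) * ballVol (n + m))) *
        ((2 * (j : ℝ) + n + m) / (2 * (j : ℝ) + m)), ?_⟩
      rintro _ ⟨z, rfl⟩
      exact hub j hj z
    refine le_antisymm (ciSup_le (hub j hj)) ?_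
    have h0 : (∫ v in {v : EuclideanSpace ℝ (Fin m) |
          ‖(0 : EuclideanSpace ℝ (Fin n))‖ ^ 2 + ‖v‖ ^ 2 ≤ 1},
            ρj n m j (‖(0 : EuclideanSpace ℝ (Fin n))‖ ^ 2 + ‖v‖ ^ 2))
        = ((m : ℝ) * ballVol m / (((n : ℝ) + m) * ballVol (n + m))) *
          ((2 * (j : ℝ) + n + m) / (2 * (j : ℝ) + m)) := by
      simp only [norm_zero, ne_eq, OfNat.ofNat_ne_zero, not_false_eq_true, zero_pow, zero_add]
      have h := radial_eq n m m j (by omega) 0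
      simp only [zero_add] at h
      rw [h, oneD_exact n m m j (by omega)]
      have h2jm : 2 * (j:ℝ) + (m:ℝ) ≠ 0 := by linarith
      field_simp
    exact h0 ▸ le_ciSup hbdd 0
  refine ⟨part1, fun j hj => (hval j hj).le, ?_⟩
  -- Part (iii)
  have h1 : Tendsto (fun j : ℕ => 2 * (j:ℝ) + m) atTop atTop :=
    tendsto_atTop_add_const_right _ _ (tendsto_natCast_atTop_atTop.const_mul_atTop two_pos)
  have h2 : Tendsto (fun j : ℕ => (n:ℝ) / (2 * (j:ℝ) + m)) atTop (nhds 0) :=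
    tendsto_const_nhds.div_atTop h1
  have h3 : Tendsto (fun j : ℕ => 1 + (n:ℝ) / (2 * (j:ℝ) + m)) atTop (nhds 1) := by
    simpa using tendsto_const_nhds.add h2
  have h4 : Tendsto (fun j : ℕ =>
      ((m : ℝ) * ballVol m / (((n : ℝ) + m) * ballVol (n + m))) *
        (1 + (n:ℝ) / (2 * (j:ℝ) + m))) atTop
      (nhds ((m : ℝ) * ballVol m / (((n : ℝ) + m) * ballVol (n + m)))) := by
    simpa using h3.const_mul ((m : ℝ) * ballVol m / (((n : ℝ) + m) * ballVol (n + m)))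
  refine Tendsto.congr' ?_ h4
  filter_upwards [eventually_ge_atTop 1] with j hj
  rw [hval j (by omega)]
  have hjR : (0:ℝ) ≤ j := by positivity
  have h2jm : 2 * (j:ℝ) + (m:ℝ) ≠ 0 := by linarith
  field_simp
  ring
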